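/- Let s_1, ..., s_{n+1} be exchangeable, almost surely distinct real random variables, and let q̂ be the ⌈(n+1)(1-α)⌉-th smallest value among s_1, ..., s_n with ⌈(n+1)(1-α)⌉ ≤ n. Then P(s_{n+1} ≤ q̂) ≤ 1 - α + 1/(n+1). -/
import Mathlib


open MeasureTheory

/-- A finite family of real random variables is exchangeable if its joint law is
invariant under every permutation of the indices. -/
def Exchangeable {Ω : Type*} [MeasurableSpace Ω] {m : ℕ} (P : Measure Ω)
    (s : Fin m → Ω → ℝ) : Prop :=
  ∀ σ : Equiv.Perm (Fin m),
    Measure.map (fun ω i => s (σ i) ω) P = Measure.map (fun ω i => s i ω) P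

/-- The `k`-th smallest value (0-indexed) of the tuple `v`. -/
noncomputable def orderStat {m : ℕ} (v : Fin m → ℝ) (k : Fin m) : ℝ :=
  v (Tuple.sort v k)

open scoped ENNReal

noncomputable def rankFn {m : ℕ} (v : Fin m → ℝ) (i : Fin m) : ℕ :=
  (Finset.univ.filter (fun j => v j ≤ v i)).card

lemma measurable_rankFn {m : ℕ} (i : Fin m) :
    Measurable (fun v : Fin m → ℝ => rankFn v i) := by
  have : (fun v : Fin m → ℝ => rankFn v i)
      = fun v => ∑ j : Fin m, if v j ≤ v i then 1 else 0 := by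
    funext v; rw [rankFn, Finset.card_filter]
  rw [this]
  exact Finset.measurable_sum _ fun j _ =>
    Measurable.ite (measurableSet_le (measurable_pi_apply j) (measurable_pi_apply i))
      measurable_const measurable_const

lemma rankFn_lt {m : ℕ} {v : Fin m → ℝ} {i j : Fin m} (h : v i < v j) :
    rankFn v i < rankFn v j := by
  apply Finset.card_lt_card
  constructor
  · intro k hk
    simp only [Finset.mem_filter, Finset.mem_univ, true_and] at *
    exact hk.trans h.le
  · intro hsub
    have := hsub (Finset.mem_filter.2 ⟨Finset.mem_univ j, le_refl _⟩)
    simp only [Finset.mem_filter, Finset.mem_univ, true_and] at this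
    exact absurd this (not_le.2 h)

lemma rankFn_injective {m : ℕ} {v : Fin m → ℝ} (hv : Function.Injective v) :
    Function.Injective (rankFn v) := by
  intro i j hij
  by_contra hne
  rcases lt_or_gt_of_ne (fun h => hne (hv h)) with h | h
  · exact absurd hij (rankFn_lt h).ne
  · exact absurd hij.symm (rankFn_lt h).ne

lemma one_le_rankFn {m : ℕ} (v : Fin m → ℝ) (i : Fin m) : 1 ≤ rankFn v i :=
  Finset.card_pos.2 ⟨i, Finset.mem_filter.2 ⟨Finset.mem_univ i, le_refl _⟩⟩

lemma rankFn_comp_perm {m : ℕ} (v : Fin m → ℝ) (σ : Equiv.Perm (Fin m)) (j : Fin m) :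
    rankFn (fun i => v (σ i)) j = rankFn v (σ j) := by
  unfold rankFn
  apply Finset.card_bij (fun a _ => σ a)
  · intro a ha
    simp only [Finset.mem_filter, Finset.mem_univ, true_and] at *
    exact ha
  · intro a _ b _ h; exact σ.injective h
  · intro b hb
    refine ⟨σ.symm b, ?_, by simp⟩
    simp only [Finset.mem_filter, Finset.mem_univ, true_and] at *
    simpa using hb

lemma le_orderStat_iff {m : ℕ} {w : Fin m → ℝ} (hw : Function.Injective w)
    {x : ℝ} (k : Fin m) :
    x ≤ orderStat w k ↔ (Finset.univ.filter (fun i => w i < x)).card ≤ (k : ℕ) := by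
  set u : Fin m → ℝ := w ∘ Tuple.sort w with hu
  have husm : StrictMono u :=
    (Tuple.monotone_sort w).strictMono_of_injective (hw.comp (Tuple.sort w).injective)
  have hcount : (Finset.univ.filter (fun i => w i < x)).card
      = (Finset.univ.filter (fun j => u j < x)).card := by
    apply Finset.card_bij (fun a _ => (Tuple.sort w).symm a)
    · intro a ha
      simp only [Finset.mem_filter, Finset.mem_univ, true_and, hu, Function.comp] at *
      simpa using ha
    · intro a _ b _ h; exact (Tuple.sort w).symm.injective h
    · intro b hb
      refine ⟨Tuple.sort w b, ?_, by simp⟩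
      simp only [Finset.mem_filter, Finset.mem_univ, true_and, hu, Function.comp] at *
      exact hb
  rw [hcount]
  have horder : orderStat w k = u k := rfl
  constructor
  · intro h
    calc (Finset.univ.filter (fun j => u j < x)).card
        ≤ (Finset.Iio k).card := by
          apply Finset.card_le_card
          intro j hj
          simp only [Finset.mem_filter, Finset.mem_univ, true_and] at hj
          rw [Finset.mem_Iio]
          exact husm.lt_iff_lt.1 (lt_of_lt_of_le hj (h.trans_eq horder))
      _ = (k : ℕ) := Fin.card_Iio k
  · intro h
    by_contra hlt
    push_neg at hlt
    rw [horder] at hlt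
    have : (Finset.Iic k).card ≤ (Finset.univ.filter (fun j => u j < x)).card := by
      apply Finset.card_le_card
      intro j hj
      rw [Finset.mem_Iic] at hj
      simp only [Finset.mem_filter, Finset.mem_univ, true_and]
      exact lt_of_le_of_lt (husm.monotone hj) hlt
    rw [Fin.card_Iic] at this
    omega

lemma rank_last_eq {n : ℕ} {v : Fin (n + 1) → ℝ} (hv : Function.Injective v) :
    rankFn v (Fin.last n)
      = (Finset.univ.filter (fun i : Fin n => v i.castSucc < v (Fin.last n))).card + 1 := by
  rw [rankFn, Finset.card_filter, Finset.card_filter, Fin.sum_univ_castSucc]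
  simp only [le_refl, if_true]
  congr 1
  apply Finset.sum_congr rfl
  intro i _
  have hne : v i.castSucc ≠ v (Fin.last n) := fun h =>
    absurd (hv h) (Fin.ne_of_lt (Fin.castSucc_lt_last i))
  by_cases h : v i.castSucc < v (Fin.last n)
  · rw [if_pos h.le, if_pos h]
  · rw [if_neg (fun hle => h (lt_of_le_of_ne hle hne)), if_neg h]

lemma measurableSet_injective (m : ℕ) :
    MeasurableSet {v : Fin m → ℝ | Function.Injective v} := by
  have : {v : Fin m → ℝ | Function.Injective v}
      = ⋂ i, ⋂ j, {v : Fin m → ℝ | v i = v j → i = j} := by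
    ext v; simp [Function.Injective, Set.mem_iInter]
  rw [this]
  refine MeasurableSet.iInter fun i => MeasurableSet.iInter fun j => ?_
  by_cases hij : i = j
  · subst hij
    have : {v : Fin m → ℝ | v i = v i → i = i} = Set.univ := by ext v; simp
    rw [this]; exact MeasurableSet.univ
  · have : {v : Fin m → ℝ | v i = v j → i = j} = {v : Fin m → ℝ | v i = v j}ᶜ := by
      ext v; simp [hij]
    rw [this]
    exact (measurableSet_eq_fun (measurable_pi_apply i) (measurable_pi_apply j)).compl

/-- Marginal coverage lower bound for split conformal prediction:
if `s 0, …, s n` are exchangeable and a.s. distinct, and `q̂` is the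
`⌈(n+1)(1-α)⌉`-th smallest of the first `n` scores, then
`P(s_{n+1} ≤ q̂) ≤ 1 - α + 1/(n+1)`. -/
theorem conformal_marginal_coverage_upper
    {Ω : Type*} [MeasurableSpace Ω] (P : Measure Ω) [IsProbabilityMeasure P]
    {n : ℕ} (s : Fin (n + 1) → Ω → ℝ) (hmeas : ∀ i, Measurable (s i))
    (hexch : Exchangeable P s)
    (hdist : ∀ᵐ ω ∂P, Function.Injective fun i => s i ω)
    (α : ℝ) (hα : α ∈ Set.Ioo (0 : ℝ) 1)
    (l : ℕ) (hl : l = ⌈((n : ℝ) + 1) * (1 - α)⌉₊) (hl1 : 1 ≤ l) (hln : l ≤ n)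
    (qhat : Ω → ℝ)
    (hq : ∀ ω, qhat ω =
      orderStat (fun i : Fin n => s i.castSucc ω) ⟨l - 1, by omega⟩) :
    P {ω | s (Fin.last n) ω ≤ qhat ω} ≤ ENNReal.ofReal (1 - α + 1 / ((n : ℝ) + 1)) := by
  obtain ⟨hα0, hα1⟩ := hα
  set F : Ω → (Fin (n + 1) → ℝ) := fun ω i => s i ω with hF
  have hFmeas : Measurable F := measurable_pi_lambda _ hmeas
  set μ : Measure (Fin (n + 1) → ℝ) := P.map F with hμ
  have hμprob : IsProbabilityMeasure μ := Measure.isProbabilityMeasure_map hFmeas.aemeasurable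
  set Inj : Set (Fin (n + 1) → ℝ) := {v | Function.Injective v} with hInj
  have hInjm : MeasurableSet Inj := measurableSet_injective (n + 1)
  have hInjc : μ Injᶜ = 0 := by
    rw [hμ, Measure.map_apply hFmeas hInjm.compl]
    have : F ⁻¹' Injᶜ = {ω | ¬ Function.Injective fun i => s i ω} := rfl
    rw [this]
    exact ae_iff.1 hdist
  set B : ℕ → Fin (n + 1) → Set (Fin (n + 1) → ℝ) := fun k i => {v | rankFn v i = k}
    with hB
  have hBm : ∀ k i, MeasurableSet (B k i) := fun k i =>
    (measurable_rankFn i) (measurableSet_singleton k)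
  -- permutation invariance
  have hperm : ∀ i k, μ (B k i) = μ (B k (Fin.last n)) := by
    intro i k
    set σ : Equiv.Perm (Fin (n + 1)) := Equiv.swap i (Fin.last n) with hσ
    set g : (Fin (n + 1) → ℝ) → (Fin (n + 1) → ℝ) := fun v j => v (σ j) with hg
    have hgm : Measurable g := measurable_pi_lambda _ fun j => measurable_pi_apply (σ j)
    have hmap : μ.map g = μ := by
      rw [hμ, Measure.map_map hgm hFmeas]
      exact hexch σ
    have hlast : σ (Fin.last n) = i := Equiv.swap_apply_right _ _
    calc μ (B k i) = μ {v | rankFn v (σ (Fin.last n)) = k} := by rw [hlast]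
      _ = μ (g ⁻¹' (B k (Fin.last n))) := by
          congr 1
          ext v
          simp only [hB, Set.mem_preimage, Set.mem_setOf_eq, hg]
          rw [rankFn_comp_perm]
      _ = μ.map g (B k (Fin.last n)) := (Measure.map_apply hgm (hBm _ _)).symm
      _ = μ (B k (Fin.last n)) := by rw [hmap]
  -- a.e. equality with intersection
  have hBI : ∀ k i, μ (B k i) = μ (B k i ∩ Inj) := by
    intro k i
    apply le_antisymm
    · calc μ (B k i) ≤ μ ((B k i ∩ Inj) ∪ Injᶜ) := by
            apply measure_mono
            intro v hv
            by_cases h : v ∈ Inj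
            · exact Or.inl ⟨hv, h⟩
            · exact Or.inr h
        _ ≤ μ (B k i ∩ Inj) + μ Injᶜ := measure_union_le _ _
        _ = μ (B k i ∩ Inj) := by rw [hInjc, add_zero]
    · exact measure_mono Set.inter_subset_left
  -- each rank class has measure at most 1/(n+1)
  have hBle : ∀ k, μ (B k (Fin.last n)) ≤ 1 / ((n : ℝ≥0∞) + 1) := by
    intro k
    have hdisj : ((Finset.univ : Finset (Fin (n + 1))) : Set (Fin (n + 1))).PairwiseDisjoint
        (fun i => B k i ∩ Inj) := by
      intro i _ j _ hij
      apply Set.disjoint_left.2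
      intro v hvi hvj
      exact hij (rankFn_injective hvj.2 (hvi.1.trans hvj.1.symm))
    have hsum : ∑ i : Fin (n + 1), μ (B k i ∩ Inj) ≤ 1 := by
      rw [← measure_biUnion_finset hdisj (fun i _ => (hBm k i).inter hInjm)]
      exact prob_le_one
    have hsum2 : ∑ i : Fin (n + 1), μ (B k (Fin.last n)) ≤ 1 := by
      calc ∑ i : Fin (n + 1), μ (B k (Fin.last n))
          = ∑ i : Fin (n + 1), μ (B k i ∩ Inj) := by
            apply Finset.sum_congr rfl
            intro i _
            rw [← hBI]
            exact (hperm i k).symm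
        _ ≤ 1 := hsum
    have hmul : ((n : ℝ≥0∞) + 1) * μ (B k (Fin.last n)) ≤ 1 := by
      have : ((n + 1 : ℕ) : ℝ≥0∞) * μ (B k (Fin.last n)) ≤ 1 := by
        simpa [Finset.sum_const, Finset.card_univ, nsmul_eq_mul] using hsum2
      simpa [Nat.cast_add, Nat.cast_one] using this
    rw [ENNReal.le_div_iff_mul_le (Or.inl (by simp)) (Or.inl (by simp))]
    rw [mul_comm]
    exact hmul
  -- event inclusion
  have hsub : {ω | s (Fin.last n) ω ≤ qhat ω} ⊆
      (F ⁻¹' Injᶜ) ∪ ⋃ k ∈ Finset.Icc 1 l, F ⁻¹' (B k (Fin.last n)) := by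
    intro ω hω
    by_cases hinj : Function.Injective (F ω)
    · right
      simp only [Set.mem_iUnion, Set.mem_preimage]
      refine ⟨rankFn (F ω) (Fin.last n), ?_, rfl⟩
      rw [Finset.mem_Icc]
      refine ⟨one_le_rankFn _ _, ?_⟩
      have hwinj : Function.Injective (fun i : Fin n => F ω i.castSucc) :=
        fun a b h => Fin.castSucc_injective n (hinj h)
      have hcard : (Finset.univ.filter
          (fun i : Fin n => F ω i.castSucc < F ω (Fin.last n))).card ≤ l - 1 := by
        have hle : F ω (Fin.last n) ≤
            orderStat (fun i : Fin n => F ω i.castSucc) ⟨l - 1, by omega⟩ := by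
          have := hω
          simp only [Set.mem_setOf_eq, hq ω] at this
          exact this
        exact (le_orderStat_iff hwinj ⟨l - 1, by omega⟩).1 hle
      rw [rank_last_eq hinj]
      omega
    · exact Or.inl hinj
  -- put it together
  have hmain : P {ω | s (Fin.last n) ω ≤ qhat ω} ≤ (l : ℝ≥0∞) / ((n : ℝ≥0∞) + 1) := by
    calc P {ω | s (Fin.last n) ω ≤ qhat ω}
        ≤ P ((F ⁻¹' Injᶜ) ∪ ⋃ k ∈ Finset.Icc 1 l, F ⁻¹' (B k (Fin.last n))) :=
          measure_mono hsub
      _ ≤ P (F ⁻¹' Injᶜ) + P (⋃ k ∈ Finset.Icc 1 l, F ⁻¹' (B k (Fin.last n))) :=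
          measure_union_le _ _
      _ ≤ μ Injᶜ + ∑ k ∈ Finset.Icc 1 l, P (F ⁻¹' (B k (Fin.last n))) := by
          apply add_le_add
          · rw [hμ, Measure.map_apply hFmeas hInjm.compl]
          · exact measure_biUnion_finset_le _ _
      _ = ∑ k ∈ Finset.Icc 1 l, μ (B k (Fin.last n)) := by
          rw [hInjc, zero_add]
          apply Finset.sum_congr rfl
          intro k _
          rw [hμ, Measure.map_apply hFmeas (hBm _ _)]
      _ ≤ ∑ k ∈ Finset.Icc 1 l, 1 / ((n : ℝ≥0∞) + 1) :=
          Finset.sum_le_sum fun k _ => hBle k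
      _ = (l : ℝ≥0∞) / ((n : ℝ≥0∞) + 1) := by
          rw [Finset.sum_const, Nat.card_Icc]
          simp [nsmul_eq_mul, div_eq_mul_inv]
  refine hmain.trans ?_
  have h1 : (l : ℝ) / ((n : ℝ) + 1) ≤ 1 - α + 1 / ((n : ℝ) + 1) := by
    have hnn : (0 : ℝ) ≤ ((n : ℝ) + 1) * (1 - α) := by
      have : (0:ℝ) ≤ (n : ℝ) + 1 := by positivity
      nlinarith
    have hc : (l : ℝ) < ((n : ℝ) + 1) * (1 - α) + 1 := by
      rw [hl]; exact Nat.ceil_lt_add_one hnn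
    rw [div_le_iff₀ (by positivity)]
    have hpos : (0:ℝ) < (n : ℝ) + 1 := by positivity
    field_simp
    nlinarith
  calc (l : ℝ≥0∞) / ((n : ℝ≥0∞) + 1)
      = ENNReal.ofReal ((l : ℝ) / ((n : ℝ) + 1)) := by
        rw [ENNReal.ofReal_div_of_pos (by positivity)]
        congr 1
        · exact (ENNReal.ofReal_natCast l).symm
        · rw [ENNReal.ofReal_add (by positivity) zero_le_one, ENNReal.ofReal_natCast,
            ENNReal.ofReal_one]
    _ ≤ _ := ENNReal.ofReal_le_ofReal h1
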